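/- Weighted strong (p,p) Fefferman–Stein inequality: for 1 < p < ∞ there is a constant C = C(n,p) such that for every weight w on ℝ^n and every f, ∫_{ℝ^n} (M_Q f)^p w dx ≤ C ∫_{ℝ^n} |f|^p M_Q w dx. -/

import Mathlib

open MeasureTheory Set
open scoped ENNReal

noncomputable section

/-- A cube in `ℝⁿ` with sides parallel to the axes. -/
def IsCube (n : ℕ) (Q : Set (Fin n → ℝ)) : Prop :=
  ∃ (a : Fin n → ℝ) (r : ℝ), 0 < r ∧ Q = Set.univ.pi fun i => Set.Ioo (a i) (a i + r)

/-- The Hardy–Littlewood maximal operator over cubes in `ℝⁿ`. -/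
def MHL {n : ℕ} (f : (Fin n → ℝ) → ℝ) (x : Fin n → ℝ) : ℝ≥0∞ :=
  ⨆ (Q : Set (Fin n → ℝ)) (_ : IsCube n Q ∧ x ∈ Q),
    (∫⁻ y in Q, ENNReal.ofReal |f y|) / volume Q

/-!
Cubes are the balls of the sup norm on `Fin n → ℝ`. If `l |Q| ≤ ∫_Q |g|` for a cube `Q`, then,
since `5Q̄ ⊆ 6Q` and `6Q` contains every point of `Q`, `w(5Q̄) ≤ 6ⁿ |Q| M w` on `Q`, whence
`l w(5Q̄) ≤ 6ⁿ ∫_Q |g| M w`. The Vitali covering lemma turns this into the weighted weak-type bound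
`l w{M g > l} ≤ 6ⁿ ∫ |g| M w`. As `M f ≤ M (f 1_{|f| > t}) + t`, this gives
`t w{M f > 2t} ≤ 6ⁿ ∫_{|f| > t} |f| M w`, and summing these over the dyadic levels `t = 2ᵏ`
(a discrete layer-cake formula) yields the strong bound with `C = 4ᵖ 6ⁿ / (1 - 2^(1-p))`.
-/

open Metric

section Dyadic

theorem ENNReal.tsum_ite_le_zpow {b : ℝ≥0∞} (hb : b ≠ 0) (hbtop : b ≠ ∞) (K : ℤ) :
    ∑' k : ℤ, (if k ≤ K then b ^ k else 0) = b ^ K * (1 - b⁻¹)⁻¹ := by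
  have hinj : Function.Injective fun m : ℕ => K - m := fun i j h => by simpa using h
  have hsupp : Function.support (fun k : ℤ => if k ≤ K then b ^ k else 0) ⊆
      range fun m : ℕ => K - m := fun k hk =>
    ⟨(K - k).toNat, by
      have : k ≤ K := by_contra fun h => hk (if_neg h)
      change K - ((K - k).toNat : ℤ) = k; omega⟩
  rw [← hinj.tsum_eq hsupp]
  simp only [sub_le_self_iff, Nat.cast_nonneg, if_true, ENNReal.zpow_sub hb hbtop, zpow_natCast,
    ENNReal.tsum_mul_left, ENNReal.inv_pow, ENNReal.tsum_geometric]

theorem ENNReal.zpow_rpow_comm (x : ℝ≥0∞) (k : ℤ) (q : ℝ) : (x ^ k) ^ q = (x ^ q) ^ k := by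
  rw [← ENNReal.rpow_intCast, ← ENNReal.rpow_intCast, ← ENNReal.rpow_mul, ← ENNReal.rpow_mul,
    mul_comm]

theorem ENNReal.tsum_ite_zpow_rpow_le {x : ℝ≥0∞} (hx : 1 < x) (hxtop : x ≠ ∞) {q : ℝ}
    (hq : 0 < q) (a : ℝ≥0∞) :
    ∑' k : ℤ, (if x ^ k < a then (x ^ k) ^ q else 0) ≤ (1 - x ^ (-q))⁻¹ * a ^ q := by
  have hx0 : x ≠ 0 := (zero_lt_one.trans hx).ne'
  rcases eq_or_ne a 0 with rfl | ha0
  · simp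
  rcases eq_or_ne a ∞ with rfl | hatop
  · rw [ENNReal.top_rpow_of_pos hq, ENNReal.mul_top (ENNReal.inv_ne_zero.2 (by simp))]
    exact le_top
  obtain ⟨K, hKa, haK⟩ := ENNReal.exists_mem_Ioc_zpow ha0 hatop hx hxtop
  have hterm (k : ℤ) : (if x ^ k < a then (x ^ k) ^ q else 0) ≤
      if k ≤ K then (x ^ q) ^ k else 0 := by
    split_ifs with hka hkK
    · rw [ENNReal.zpow_rpow_comm]
    · refine absurd (hka.trans_le haK) (not_lt.2 (ENNReal.zpow_le_of_le hx.le ?_))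
      omega
    all_goals exact zero_le
  have hxq0 : x ^ q ≠ 0 := (ENNReal.rpow_pos (zero_lt_one.trans hx) hxtop).ne'
  have hxqtop : x ^ q ≠ ∞ := ENNReal.rpow_ne_top_of_nonneg hq.le hxtop
  calc ∑' k : ℤ, (if x ^ k < a then (x ^ k) ^ q else 0)
      ≤ ∑' k : ℤ, (if k ≤ K then (x ^ q) ^ k else 0) := ENNReal.tsum_le_tsum hterm
    _ = (x ^ K) ^ q * (1 - x ^ (-q))⁻¹ := by
        rw [ENNReal.tsum_ite_le_zpow hxq0 hxqtop, ENNReal.zpow_rpow_comm, ENNReal.rpow_neg]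
    _ ≤ (1 - x ^ (-q))⁻¹ * a ^ q := by
        rw [mul_comm]; gcongr

theorem ENNReal.rpow_le_rpow_mul_tsum_ite {x : ℝ≥0∞} (hx : 1 < x) (hxtop : x ≠ ∞) {p : ℝ}
    (hp : 0 < p) (a : ℝ≥0∞) :
    a ^ p ≤ x ^ p * ∑' k : ℤ, (if x * x ^ k < a then (x * x ^ k) ^ p else 0) := by
  have hx0 : x ≠ 0 := (zero_lt_one.trans hx).ne'
  rcases eq_or_ne a 0 with rfl | ha0
  · simp [ENNReal.zero_rpow_of_pos hp]
  rcases eq_or_ne a ∞ with rfl | hatop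
  · refine le_top.trans (le_trans ?_ (le_mul_of_one_le_left' (ENNReal.one_le_rpow hx.le hp)))
    refine le_of_tendsto' (ENNReal.tendsto_pow_atTop_nhds_top_iff.2 (ENNReal.one_lt_rpow hx hp))
      fun m => le_trans ?_ (ENNReal.le_tsum (m : ℤ))
    rw [if_pos (ENNReal.mul_lt_top hxtop.lt_top (ENNReal.zpow_lt_top hx0 hxtop _)),
      ← zpow_natCast (x ^ p), ← ENNReal.zpow_rpow_comm]
    exact ENNReal.rpow_le_rpow (le_mul_of_one_le_left' hx.le) hp.le
  obtain ⟨K, hKa, haK⟩ := ENNReal.exists_mem_Ioc_zpow ha0 hatop hx hxtop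
  have hshift (k : ℤ) : x * x ^ (k - 1) = x ^ k := by
    have := ENNReal.zpow_add hx0 hxtop (k - 1) 1
    rwa [sub_add_cancel, zpow_one, mul_comm, eq_comm] at this
  calc a ^ p ≤ (x ^ (K + 1)) ^ p := ENNReal.rpow_le_rpow haK hp.le
    _ = x ^ p * (x * x ^ (K - 1)) ^ p := by
        rw [hshift, ← hshift (K + 1), add_sub_cancel_right, ENNReal.mul_rpow_of_nonneg _ _ hp.le]
    _ ≤ x ^ p * ∑' k : ℤ, (if x * x ^ k < a then (x * x ^ k) ^ p else 0) := by
        gcongr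
        refine le_trans ?_ (ENNReal.le_tsum (K - 1))
        rw [if_pos (by rwa [hshift])]

theorem ENNReal.tsum_rpow_mul_inv_mul_ite_le {x : ℝ≥0∞} (hx : 1 < x) (hxtop : x ≠ ∞) {p : ℝ}
    (hp : 1 < p) (g : ℝ≥0∞) :
    ∑' k : ℤ, (x * x ^ k) ^ p * (x ^ k)⁻¹ * (if x ^ k < g then g else 0) ≤
      x ^ p * (1 - x ^ (1 - p))⁻¹ * g ^ p := by
  have hx0 : x ≠ 0 := (zero_lt_one.trans hx).ne'
  rcases eq_or_ne g ∞ with rfl | hgtop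
  · rw [ENNReal.top_rpow_of_pos (by linarith), ENNReal.mul_top]
    · exact le_top
    · exact mul_ne_zero (ENNReal.rpow_pos (zero_lt_one.trans hx) hxtop).ne'
        (ENNReal.inv_ne_zero.2 (by simp))
  rcases eq_or_ne g 0 with rfl | hg0
  · simp
  have hterm (k : ℤ) : (x * x ^ k) ^ p * (x ^ k)⁻¹ * (if x ^ k < g then g else 0) =
      x ^ p * g * (if x ^ k < g then (x ^ k) ^ (p - 1) else 0) := by
    have hk0 : x ^ k ≠ 0 := (ENNReal.zpow_pos hx0 hxtop k).ne'
    split_ifs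
    · rw [ENNReal.mul_rpow_of_nonneg _ _ (by linarith),
        ENNReal.rpow_sub _ _ hk0 (ENNReal.zpow_ne_top hx0 hxtop k), ENNReal.rpow_one,
        div_eq_mul_inv]
      ring
    · simp
  calc ∑' k : ℤ, (x * x ^ k) ^ p * (x ^ k)⁻¹ * (if x ^ k < g then g else 0)
      = x ^ p * g * ∑' k : ℤ, (if x ^ k < g then (x ^ k) ^ (p - 1) else 0) := by
        rw [tsum_congr hterm, ENNReal.tsum_mul_left]
    _ ≤ x ^ p * g * ((1 - x ^ (-(p - 1)))⁻¹ * g ^ (p - 1)) := by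
        gcongr; exact ENNReal.tsum_ite_zpow_rpow_le hx hxtop (by linarith) g
    _ = x ^ p * (1 - x ^ (1 - p))⁻¹ * g ^ p := by
        rw [neg_sub, ENNReal.rpow_sub _ _ hg0 hgtop, ENNReal.rpow_one, mul_assoc (x ^ p),
          mul_left_comm g, ENNReal.mul_div_cancel hg0 hgtop, mul_assoc]

end Dyadic

section LayerCake

variable {α : Type*} [MeasurableSpace α] {μ : Measure α}

theorem lintegral_rpow_mul_le_tsum {x : ℝ≥0∞} (hx : 1 < x) (hxtop : x ≠ ∞) {p : ℝ} (hp : 0 < p)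
    {F W : α → ℝ≥0∞} (hF : Measurable F) (hW : AEMeasurable W μ) :
    ∫⁻ a, F a ^ p * W a ∂μ ≤
      x ^ p * ∑' k : ℤ, (x * x ^ k) ^ p * ∫⁻ a in {a | x * x ^ k < F a}, W a ∂μ := by
  have hmeas (k : ℤ) : MeasurableSet {a | x * x ^ k < F a} := measurableSet_lt measurable_const hF
  calc ∫⁻ a, F a ^ p * W a ∂μ
      ≤ ∫⁻ a, x ^ p *
          ∑' k : ℤ, {a | x * x ^ k < F a}.indicator (fun a => (x * x ^ k) ^ p * W a) a ∂μ := by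
        refine lintegral_mono fun a => ?_
        calc F a ^ p * W a
            ≤ x ^ p * (∑' k : ℤ, (if x * x ^ k < F a then (x * x ^ k) ^ p else 0)) * W a := by
              gcongr; exact ENNReal.rpow_le_rpow_mul_tsum_ite hx hxtop hp (F a)
          _ = _ := by
              simp only [mul_assoc, ← ENNReal.tsum_mul_right, indicator_apply, mem_ofPred_eq,
                ite_mul, zero_mul]
    _ = x ^ p * ∑' k : ℤ, (x * x ^ k) ^ p * ∫⁻ a in {a | x * x ^ k < F a}, W a ∂μ := by
        rw [lintegral_const_mul'' _ (AEMeasurable.tsum fun k =>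
            (hW.const_mul _).indicator (hmeas k)),
          lintegral_tsum fun k => (hW.const_mul _).indicator (hmeas k)]
        simp_rw [lintegral_indicator (hmeas _), lintegral_const_mul'' _ hW.restrict]

theorem tsum_mul_lintegral_indicator_le {x : ℝ≥0∞} (hx : 1 < x) (hxtop : x ≠ ∞) {p : ℝ}
    (hp : 1 < p) {G V : α → ℝ≥0∞} (hG : AEMeasurable G μ) (hV : AEMeasurable V μ) :
    ∑' k : ℤ, (x * x ^ k) ^ p * (x ^ k)⁻¹ * ∫⁻ a, {a | x ^ k < G a}.indicator G a * V a ∂μ ≤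
      x ^ p * (1 - x ^ (1 - p))⁻¹ * ∫⁻ a, G a ^ p * V a ∂μ := by
  have hmeas (k : ℤ) : AEMeasurable (fun a => {a | x ^ k < G a}.indicator G a * V a) μ :=
    (hG.indicator₀ (nullMeasurableSet_lt aemeasurable_const hG)).mul hV
  calc ∑' k : ℤ, (x * x ^ k) ^ p * (x ^ k)⁻¹ * ∫⁻ a, {a | x ^ k < G a}.indicator G a * V a ∂μ
      = ∫⁻ a, (∑' k : ℤ, (x * x ^ k) ^ p * (x ^ k)⁻¹ * (if x ^ k < G a then G a else 0)) *
          V a ∂μ := by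
        simp_rw [← lintegral_const_mul'' _ (hmeas _)]
        rw [← lintegral_tsum fun k => (hmeas k).const_mul _]
        simp only [← ENNReal.tsum_mul_right, indicator_apply, mem_ofPred_eq, mul_assoc]
    _ ≤ ∫⁻ a, x ^ p * (1 - x ^ (1 - p))⁻¹ * G a ^ p * V a ∂μ := by
        gcongr with a; exact ENNReal.tsum_rpow_mul_inv_mul_ite_le hx hxtop hp (G a)
    _ = x ^ p * (1 - x ^ (1 - p))⁻¹ * ∫⁻ a, G a ^ p * V a ∂μ := by
        refine (lintegral_congr fun a => mul_assoc _ _ _).trans ?_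
        exact lintegral_const_mul'' _ (f := fun a => G a ^ p * V a) ((hG.pow_const p).mul hV)

end LayerCake

variable {n : ℕ}

theorem isCube_iff_exists_ball {Q : Set (Fin n → ℝ)} :
    IsCube n Q ↔ ∃ (c : Fin n → ℝ) (r : ℝ), 0 < r ∧ Q = ball c r := by
  have ball_eq (c : Fin n → ℝ) {r : ℝ} (hr : 0 < r) :
      ball c r = univ.pi fun i => Ioo (c i - r) (c i + r) := by
    rw [ball_pi _ hr]
    exact pi_congr rfl fun i _ => Real.ball_eq_Ioo (c i) r
  constructor
  · rintro ⟨a, r, hr, rfl⟩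
    refine ⟨fun i => a i + r / 2, r / 2, half_pos hr, ?_⟩
    rw [ball_eq _ (half_pos hr)]
    exact pi_congr rfl fun i _ => by congr 1 <;> ring
  · rintro ⟨c, r, hr, rfl⟩
    refine ⟨fun i => c i - r, 2 * r, by positivity, ?_⟩
    rw [ball_eq c hr]
    exact pi_congr rfl fun i _ => by congr 1; ring

theorem volume_ball_mul (c : Fin n → ℝ) {r s : ℝ} (hr : 0 < r) (hs : 0 < s) :
    volume (ball c (s * r)) = ENNReal.ofReal s ^ n * volume (ball c r) := by
  rw [Real.volume_pi_ball c (mul_pos hs hr), Real.volume_pi_ball c hr, Fintype.card_fin,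
    ← ENNReal.ofReal_pow hs.le, ← ENNReal.ofReal_mul (by positivity), ← mul_pow]
  ring_nf

theorem le_MHL_of_mem_ball (f : (Fin n → ℝ) → ℝ) {x c : Fin n → ℝ} {r : ℝ} (hr : 0 < r)
    (hx : x ∈ ball c r) :
    (∫⁻ y in ball c r, ENNReal.ofReal |f y|) / volume (ball c r) ≤ MHL f x :=
  le_iSup₂_of_le (f := fun (Q : Set (Fin n → ℝ)) (_ : IsCube n Q ∧ x ∈ Q) =>
    (∫⁻ y in Q, ENNReal.ofReal |f y|) / volume Q) (ball c r)
    ⟨isCube_iff_exists_ball.2 ⟨c, r, hr, rfl⟩, hx⟩ le_rfl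

theorem exists_ball_of_lt_MHL {f : (Fin n → ℝ) → ℝ} {x : Fin n → ℝ} {l : ℝ≥0∞}
    (h : l < MHL f x) :
    ∃ (c : Fin n → ℝ) (r : ℝ), 0 < r ∧ x ∈ ball c r ∧
      l * volume (ball c r) < ∫⁻ y in ball c r, ENNReal.ofReal |f y| := by
  simp only [MHL, lt_iSup_iff] at h
  obtain ⟨Q, ⟨hQ, hxQ⟩, hlt⟩ := h
  obtain ⟨c, r, hr, rfl⟩ := isCube_iff_exists_ball.1 hQ
  refine ⟨c, r, hr, hxQ, ?_⟩
  rwa [ENNReal.lt_div_iff_mul_lt (Or.inl (measure_ball_pos volume c hr).ne')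
    (Or.inl measure_ball_lt_top.ne)] at hlt

theorem isOpen_setOf_lt_MHL (f : (Fin n → ℝ) → ℝ) (l : ℝ≥0∞) : IsOpen {x | l < MHL f x} := by
  refine isOpen_iff_forall_mem_open.2 fun x hx => ?_
  obtain ⟨c, r, hr, hxc, hlt⟩ := exists_ball_of_lt_MHL hx
  refine ⟨ball c r, fun y hy => (le_MHL_of_mem_ball f hr hy).trans_lt' ?_, isOpen_ball, hxc⟩
  rwa [ENNReal.lt_div_iff_mul_lt (Or.inl (measure_ball_pos volume c hr).ne')
    (Or.inl measure_ball_lt_top.ne)]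

theorem lowerSemicontinuous_MHL (f : (Fin n → ℝ) → ℝ) : LowerSemicontinuous (MHL f) :=
  fun _ l hl => (isOpen_setOf_lt_MHL f l).mem_nhds hl

theorem MHL_le_MHL_indicator_add (f : (Fin n → ℝ) → ℝ) (t : ℝ≥0∞) (x : Fin n → ℝ) :
    MHL f x ≤ MHL ({y | t < ENNReal.ofReal |f y|}.indicator f) x + t := by
  set g := {y | t < ENNReal.ofReal |f y|}.indicator f
  refine iSup₂_le fun Q ⟨hQ, hxQ⟩ => ?_
  obtain ⟨c, r, hr, rfl⟩ := isCube_iff_exists_ball.1 hQ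
  have hV0 := (measure_ball_pos volume c hr).ne'
  have hVtop := (measure_ball_lt_top (μ := volume) (x := c) (r := r)).ne
  have hfg (y : Fin n → ℝ) : ENNReal.ofReal |f y| ≤ ENNReal.ofReal |g y| + t := by
    by_cases hy : t < ENNReal.ofReal |f y|
    · simp [g, hy]
    · simpa [g, hy] using not_lt.1 hy
  calc (∫⁻ y in ball c r, ENNReal.ofReal |f y|) / volume (ball c r)
      ≤ (∫⁻ y in ball c r, (ENNReal.ofReal |g y| + t)) / volume (ball c r) := by
        gcongr with y; exact hfg y
    _ = (∫⁻ y in ball c r, ENNReal.ofReal |g y|) / volume (ball c r) + t := by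
        rw [lintegral_add_right _ measurable_const, setLIntegral_const, ENNReal.add_div,
          ENNReal.mul_div_cancel_right hV0 hVtop]
    _ ≤ MHL g x + t := by gcongr; exact le_MHL_of_mem_ball g hr hxQ

theorem mul_setLIntegral_closedBall_le {g w : (Fin n → ℝ) → ℝ} {c : Fin n → ℝ} {r : ℝ}
    {l : ℝ≥0∞} (hr : 0 < r)
    (hl : l * volume (ball c r) ≤ ∫⁻ y in ball c r, ENNReal.ofReal |g y|) :
    l * ∫⁻ y in closedBall c (5 * r), ENNReal.ofReal |w y| ≤
      6 ^ n * ∫⁻ y in ball c r, ENNReal.ofReal |g y| * MHL w y := by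
  set V := volume (ball c r)
  set W := ∫⁻ y in closedBall c (5 * r), ENNReal.ofReal |w y|
  have hV0 : V ≠ 0 := (measure_ball_pos volume c hr).ne'
  have hVtop : V ≠ ∞ := measure_ball_lt_top.ne
  have hW (y : Fin n → ℝ) (hy : y ∈ ball c r) : W ≤ MHL w y * (6 ^ n * V) := by
    have h6 : 0 < 6 * r := by positivity
    have hV6 : volume (ball c (6 * r)) = 6 ^ n * V := by
      rw [volume_ball_mul c hr (by norm_num : (0 : ℝ) < 6), ENNReal.ofReal_ofNat]
    calc W ≤ ∫⁻ z in ball c (6 * r), ENNReal.ofReal |w z| :=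
          lintegral_mono_set (closedBall_subset_ball (by linarith))
      _ ≤ MHL w y * volume (ball c (6 * r)) := by
          rw [← ENNReal.div_le_iff (measure_ball_pos volume c h6).ne' measure_ball_lt_top.ne]
          exact le_MHL_of_mem_ball w h6 (ball_subset_ball (by linarith) hy)
      _ = MHL w y * (6 ^ n * V) := by rw [hV6]
  refine (ENNReal.mul_le_mul_iff_left hV0 hVtop).1 ?_
  calc l * W * V = l * V * W := mul_right_comm _ _ _
    _ ≤ (∫⁻ y in ball c r, ENNReal.ofReal |g y|) * W := by gcongr
    _ ≤ ∫⁻ y in ball c r, ENNReal.ofReal |g y| * W := lintegral_mul_const_le _ _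
    _ ≤ ∫⁻ y in ball c r, ENNReal.ofReal |g y| * MHL w y * (6 ^ n * V) :=
        setLIntegral_mono' measurableSet_ball fun y hy => by
          rw [mul_assoc]; gcongr; exact hW y hy
    _ = 6 ^ n * (∫⁻ y in ball c r, ENNReal.ofReal |g y| * MHL w y) * V := by
        rw [lintegral_mul_const' _ _ (ENNReal.mul_ne_top (by simp) hVtop)]; ring

theorem mul_setLIntegral_biUnion_ball_le {g w : (Fin n → ℝ) → ℝ} {l : ℝ≥0∞} {R : ℝ}
    (t : Set ((Fin n → ℝ) × ℝ)) (ht : ∀ b ∈ t, 0 < b.2 ∧ b.2 ≤ R ∧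
      l * volume (ball b.1 b.2) ≤ ∫⁻ y in ball b.1 b.2, ENNReal.ofReal |g y|) :
    l * ∫⁻ y in ⋃ b ∈ t, ball b.1 b.2, ENNReal.ofReal |w y| ≤
      6 ^ n * ∫⁻ y, ENNReal.ofReal |g y| * MHL w y := by
  obtain ⟨u, hut, hdisj, hcover⟩ :=
    Vitali.exists_disjoint_subfamily_covering_enlargement_closedBall t Prod.fst Prod.snd R
      (fun b hb => (ht b hb).2.1) 5 (by norm_num)
  have hdisj_ball : u.PairwiseDisjoint fun b => ball b.1 b.2 :=
    hdisj.mono fun _ => ball_subset_closedBall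
  have hu : u.Countable := hdisj_ball.countable_of_isOpen (fun _ _ => isOpen_ball)
    fun b hb => nonempty_ball.2 (ht b (hut hb)).1
  have hsub : ⋃ b ∈ t, ball b.1 b.2 ⊆ ⋃ b ∈ u, closedBall b.1 (5 * b.2) := by
    refine iUnion₂_subset fun a ha => ?_
    obtain ⟨b, hb, hab⟩ := hcover a ha
    exact ball_subset_closedBall.trans
      (hab.trans (subset_biUnion_of_mem (u := fun b => closedBall b.1 (5 * b.2)) hb))
  calc l * ∫⁻ y in ⋃ b ∈ t, ball b.1 b.2, ENNReal.ofReal |w y|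
      ≤ l * ∑' b : u, ∫⁻ y in closedBall b.1.1 (5 * b.1.2), ENNReal.ofReal |w y| := by
        gcongr
        have := hu.to_subtype
        exact (lintegral_mono_set hsub).trans (biUnion_eq_iUnion u _ ▸ lintegral_iUnion_le _ _)
    _ = ∑' b : u, l * ∫⁻ y in closedBall b.1.1 (5 * b.1.2), ENNReal.ofReal |w y| :=
        ENNReal.tsum_mul_left.symm
    _ ≤ ∑' b : u, 6 ^ n * ∫⁻ y in ball b.1.1 b.1.2, ENNReal.ofReal |g y| * MHL w y :=
        ENNReal.tsum_le_tsum fun b =>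
          mul_setLIntegral_closedBall_le (ht b (hut b.2)).1 (ht b (hut b.2)).2.2
    _ = 6 ^ n * ∫⁻ y in ⋃ b ∈ u, ball b.1 b.2, ENNReal.ofReal |g y| * MHL w y := by
        rw [ENNReal.tsum_mul_left, lintegral_biUnion hu (fun _ _ => measurableSet_ball) hdisj_ball]
    _ ≤ 6 ^ n * ∫⁻ y, ENNReal.ofReal |g y| * MHL w y :=
        mul_le_mul_right (setLIntegral_le_lintegral _ _) _

theorem mul_setLIntegral_lt_MHL_le (l : ℝ≥0∞) (g w : (Fin n → ℝ) → ℝ) :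
    l * ∫⁻ x in {x | l < MHL g x}, ENNReal.ofReal |w x| ≤
      6 ^ n * ∫⁻ x, ENNReal.ofReal |g x| * MHL w x := by
  set t : ℕ → Set ((Fin n → ℝ) × ℝ) := fun m => {b | 0 < b.2 ∧ b.2 ≤ m ∧
    l * volume (ball b.1 b.2) ≤ ∫⁻ y in ball b.1 b.2, ENNReal.ofReal |g y|}
  have hsub : {x | l < MHL g x} ⊆ ⋃ m, ⋃ b ∈ t m, ball b.1 b.2 := by
    intro x hx
    obtain ⟨c, r, hr, hxc, hlt⟩ := exists_ball_of_lt_MHL hx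
    obtain ⟨m, hm⟩ := exists_nat_ge r
    exact mem_iUnion.2 ⟨m, mem_biUnion (x := (c, r)) ⟨hr, hm, hlt.le⟩ hxc⟩
  have hmono : Monotone fun m => ⋃ b ∈ t m, ball b.1 b.2 := fun i j hij =>
    biUnion_subset_biUnion_left fun b ⟨hb, hbi, hbl⟩ => ⟨hb, hbi.trans (by exact_mod_cast hij), hbl⟩
  calc l * ∫⁻ x in {x | l < MHL g x}, ENNReal.ofReal |w x|
      ≤ l * ⨆ m, ∫⁻ x in ⋃ b ∈ t m, ball b.1 b.2, ENNReal.ofReal |w x| := by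
        rw [← setLIntegral_iUnion_of_directed _ hmono.directed_le]
        gcongr
    _ = ⨆ m, l * ∫⁻ x in ⋃ b ∈ t m, ball b.1 b.2, ENNReal.ofReal |w x| := ENNReal.mul_iSup _ _
    _ ≤ 6 ^ n * ∫⁻ x, ENNReal.ofReal |g x| * MHL w x :=
        iSup_le fun m => mul_setLIntegral_biUnion_ball_le (t m) fun _ hb => hb

theorem mul_setLIntegral_two_mul_lt_MHL_le (f w : (Fin n → ℝ) → ℝ) {t : ℝ≥0∞} (ht : t ≠ ∞) :
    t * ∫⁻ x in {x | 2 * t < MHL f x}, ENNReal.ofReal |w x| ≤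
      6 ^ n * ∫⁻ x, {y | t < ENNReal.ofReal |f y|}.indicator (fun y => ENNReal.ofReal |f y|) x *
        MHL w x := by
  set g := {y | t < ENNReal.ofReal |f y|}.indicator f
  have hsub : {x | 2 * t < MHL f x} ⊆ {x | t < MHL g x} := fun x hx => by
    have := hx.trans_le (MHL_le_MHL_indicator_add f t x)
    rwa [two_mul, ENNReal.add_lt_add_iff_right ht] at this
  have hg : (fun x => ENNReal.ofReal |g x|) =
      {y | t < ENNReal.ofReal |f y|}.indicator fun y => ENNReal.ofReal |f y| :=
    (indicator_comp_of_zero (g := fun a => ENNReal.ofReal |a|) (by simp)).symm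
  calc t * ∫⁻ x in {x | 2 * t < MHL f x}, ENNReal.ofReal |w x|
      ≤ t * ∫⁻ x in {x | t < MHL g x}, ENNReal.ofReal |w x| := by gcongr
    _ ≤ 6 ^ n * ∫⁻ x, ENNReal.ofReal |g x| * MHL w x := mul_setLIntegral_lt_MHL_le t g w
    _ = _ := by simp_rw [← hg]

theorem lintegral_MHL_rpow_mul_le {p : ℝ} (hp : 1 < p) {f w : (Fin n → ℝ) → ℝ}
    (hf : AEMeasurable f) (hw : AEMeasurable w) :
    ∫⁻ x, MHL f x ^ p * ENNReal.ofReal |w x| ≤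
      2 ^ p * 6 ^ n * (2 ^ p * (1 - 2 ^ (1 - p))⁻¹) *
        ∫⁻ x, ENNReal.ofReal (|f x| ^ p) * MHL w x := by
  have h2 : (2 : ℝ≥0∞) ≠ ∞ := ENNReal.ofNat_ne_top
  calc ∫⁻ x, MHL f x ^ p * ENNReal.ofReal |w x|
      ≤ 2 ^ p * ∑' k : ℤ, (2 * 2 ^ k) ^ p *
          ∫⁻ x in {x | 2 * 2 ^ k < MHL f x}, ENNReal.ofReal |w x| :=
        lintegral_rpow_mul_le_tsum ENNReal.one_lt_two h2 (by linarith)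
          (lowerSemicontinuous_MHL f).measurable hw.abs.ennreal_ofReal
    _ ≤ 2 ^ p * ∑' k : ℤ, (2 * 2 ^ k) ^ p * ((2 ^ k)⁻¹ * (6 ^ n *
          ∫⁻ x, {y | 2 ^ k < ENNReal.ofReal |f y|}.indicator (fun y => ENNReal.ofReal |f y|) x *
            MHL w x)) := by
        gcongr with k
        exact (ENNReal.mul_le_iff_le_inv (ENNReal.zpow_pos two_ne_zero h2 k).ne'
          (ENNReal.zpow_ne_top two_ne_zero h2 k)).1
          (mul_setLIntegral_two_mul_lt_MHL_le f w (ENNReal.zpow_ne_top two_ne_zero h2 k))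
    _ = 2 ^ p * 6 ^ n * ∑' k : ℤ, (2 * 2 ^ k) ^ p * (2 ^ k)⁻¹ *
          ∫⁻ x, {y | 2 ^ k < ENNReal.ofReal |f y|}.indicator (fun y => ENNReal.ofReal |f y|) x *
            MHL w x := by
        rw [mul_assoc, ← ENNReal.tsum_mul_left, ← ENNReal.tsum_mul_left, ← ENNReal.tsum_mul_left]
        exact tsum_congr fun k => by ring
    _ ≤ 2 ^ p * 6 ^ n * (2 ^ p * (1 - 2 ^ (1 - p))⁻¹ *
          ∫⁻ x, ENNReal.ofReal |f x| ^ p * MHL w x) := by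
        gcongr
        exact tsum_mul_lintegral_indicator_le ENNReal.one_lt_two h2 hp hf.abs.ennreal_ofReal
          (lowerSemicontinuous_MHL w).measurable.aemeasurable
    _ = _ := by
        simp_rw [ENNReal.ofReal_rpow_of_nonneg (abs_nonneg _) (by linarith : (0 : ℝ) ≤ p),
          mul_assoc]

/-- The strong (p,p) Fefferman–Stein inequality. -/
theorem fefferman_stein_strong (n : ℕ) (p : ℝ) (hp : 1 < p) :
    ∃ C : ℝ, 0 < C ∧
      ∀ (w f : (Fin n → ℝ) → ℝ), (∀ x, 0 ≤ w x) → LocallyIntegrable w volume →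
        LocallyIntegrable f volume →
          ∫⁻ x, (MHL f x) ^ p * ENNReal.ofReal (w x) ≤
            ENNReal.ofReal C * ∫⁻ x, ENNReal.ofReal (|f x| ^ p) * MHL w x := by
  set C : ℝ≥0∞ := 2 ^ p * 6 ^ n * (2 ^ p * (1 - 2 ^ (1 - p))⁻¹)
  have h2p : (2 : ℝ≥0∞) ^ p ≠ ∞ := ENNReal.rpow_ne_top_of_nonneg (by linarith) ENNReal.ofNat_ne_top
  have hgeom : 0 < 1 - (2 : ℝ≥0∞) ^ (1 - p) :=
    tsub_pos_of_lt (ENNReal.rpow_lt_one_of_one_lt_of_neg ENNReal.one_lt_two (by linarith))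
  have hC0 : C ≠ 0 := by simp [C]
  have hCtop : C ≠ ∞ :=
    ENNReal.mul_ne_top (ENNReal.mul_ne_top h2p (by simp))
      (ENNReal.mul_ne_top h2p (ENNReal.inv_ne_top.2 hgeom.ne'))
  refine ⟨C.toReal, ENNReal.toReal_pos hC0 hCtop, fun w f _ hw hf => ?_⟩
  rw [ENNReal.ofReal_toReal hCtop]
  calc ∫⁻ x, MHL f x ^ p * ENNReal.ofReal (w x)
      ≤ ∫⁻ x, MHL f x ^ p * ENNReal.ofReal |w x| := by gcongr; exact le_abs_self _
    _ ≤ C * ∫⁻ x, ENNReal.ofReal (|f x| ^ p) * MHL w x :=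
        lintegral_MHL_rpow_mul_le hp hf.aestronglyMeasurable.aemeasurable
          hw.aestronglyMeasurable.aemeasurable
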